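/- arXiv:0901.4129 — 2 statements merged into one kernel-verified Lean document; each statement's English description precedes it below -/
import Mathlib

section
/- Let C be a quasi-cyclic code defined by a J×L polynomial parity-check matrix H(x) over F_2[x]/(x^r−1), with J+1 ≤ L. If there exists a subset S ⊆ {0,...,L-1} of size J+1 such that Σ_{i∈S} wt(perm(H_{S\{i}}(x))) > 0, then the minimum Hamming distance of C satisfies d_min(C) ≤ Σ_{i∈S} wt(perm(H_{S\{i}}(x))). -/
open Matrix BigOperators

noncomputable section

/-- The ring `F₂[x]/(xʳ−1)`, realized as the group algebra of `ℤ/rℤ` over `F₂`.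
    (For `r > 0` this is isomorphic to `F₂[x]/(xʳ−1)`, and the canonical representative
    of degree `< r` corresponds to the `Finsupp` on `ZMod r`.) -/
abbrev Rr (r : ℕ) : Type := AddMonoidAlgebra (ZMod 2) (ZMod r)

/-- The monomial `xᵃ`. -/
def mono {r : ℕ} (a : ZMod r) : Rr r := AddMonoidAlgebra.single a 1

/-- Weight of an element of `Rr r`: the number of nonzero coefficients. -/
def wt {r : ℕ} (p : Rr r) : ℕ := p.coeff.support.card

/-- Square submatrix of `H` given by the columns in `T`. -/
def colSub {J L : ℕ} {R : Type*} (H : Matrix (Fin J) (Fin L) R) (T : Finset (Fin L))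
    (h : T.card = J) : Matrix (Fin J) (Fin J) R :=
  fun j k => H j (T.orderIsoOfFin h k)

/-- Square submatrix of `H` given by the columns in `S \ {i}` where `S` has `J+1` elements. -/
def eraseSub {J L : ℕ} {R : Type*} (H : Matrix (Fin J) (Fin L) R) (S : Finset (Fin L))
    (hS : S.card = J + 1) (i : Fin L) (hi : i ∈ S) : Matrix (Fin J) (Fin J) R :=
  colSub H (S.erase i) (by rw [Finset.card_erase_of_mem hi, hS]; rfl)

def isCodeword {r : ℕ} {ι κ : Type*} [Fintype κ] (H : Matrix ι κ (Rr r)) (c : κ → Rr r) : Prop :=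
  ∀ j, ∑ i, H j i * c i = 0

/-- Hamming weight of a vector over `Rr r`. -/
def wH {r : ℕ} {κ : Type*} [Fintype κ] (c : κ → Rr r) : ℕ := ∑ i, wt (c i)

/-- Minimum Hamming distance of the code with parity-check matrix `H`. -/
def dmin {r : ℕ} {ι κ : Type*} [Fintype κ] (H : Matrix ι κ (Rr r)) : ℕ :=
  sInf {w | ∃ c, isCodeword H c ∧ c ≠ 0 ∧ wH c = w}

/-! In characteristic 2 the permanent is the determinant, so the vector `c` with
`c i = perm(H_{S∖{i}})` for `i ∈ S` and `c i = 0` otherwise is, up to signs that vanish, the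
vector of signed maximal minors of the columns `S`. Its product with any row `h` of `H` is the
Laplace expansion of the determinant of those columns with `h` put on top, a matrix with a
repeated row; so `c` is a codeword, and its weight is the sum in the statement. -/

instance Rr.charP_two (r : ℕ) : CharP (Rr r) 2 :=
  charP_of_injective_algebraMap' (ZMod 2) 2

namespace Matrix

variable {R : Type*} [CommRing R]

theorem permanent_eq_det_of_charP_two [CharP R 2] {n : Type*} [Fintype n] [DecidableEq n]
    (M : Matrix n n R) : M.permanent = M.det := by
  rw [det_apply', permanent]
  refine Finset.sum_congr rfl fun σ _ => ?_
  rcases Int.units_eq_one_or (Equiv.Perm.sign σ) with h | h <;> simp [h, CharTwo.neg_eq]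

theorem sum_negOnePow_mul_det_submatrix_succAbove {n : ℕ}
    (A : Matrix (Fin n) (Fin (n + 1)) R) (j : Fin n) :
    ∑ k : Fin (n + 1), (-1) ^ (k : ℕ) * A j k * (A.submatrix id k.succAbove).det = 0 := by
  let M : Matrix (Fin (n + 1)) (Fin (n + 1)) R := vecCons (A j) A
  have hM : M.det = 0 :=
    det_zero_of_row_eq (Fin.succ_ne_zero j).symm (cons_val_succ (A j) A j).symm
  rwa [det_succ_row_zero] at hM

theorem mulVec_permanent_submatrix_succAbove [CharP R 2] {n : ℕ}
    (A : Matrix (Fin n) (Fin (n + 1)) R) :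
    A *ᵥ (fun k => (A.submatrix id k.succAbove).permanent) = 0 := by
  ext j
  simpa [mulVec, dotProduct, permanent_eq_det_of_charP_two, CharTwo.neg_eq, mul_comm]
    using sum_negOnePow_mul_det_submatrix_succAbove A j

end Matrix

theorem Finset.orderEmbOfFin_erase {α : Type*} [LinearOrder α] (S : Finset α) {n : ℕ}
    (hS : S.card = n + 1) (k : Fin (n + 1))
    (h : (S.erase (S.orderEmbOfFin hS k)).card = n) (m : Fin n) :
    (S.erase (S.orderEmbOfFin hS k)).orderEmbOfFin h m = S.orderEmbOfFin hS (k.succAbove m) := by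
  refine (congrFun (orderEmbOfFin_unique h (f := fun m => S.orderEmbOfFin hS (k.succAbove m))
    (fun m => mem_erase.2 ⟨fun he => ?_, orderEmbOfFin_mem _ _ _⟩) ?_) m).symm
  · exact Fin.succAbove_ne k m ((S.orderEmbOfFin hS).injective he)
  · exact (S.orderEmbOfFin hS).strictMono.comp (Fin.strictMono_succAbove k)

section PermanentVector

variable {R : Type*} {J L : ℕ} (H : Matrix (Fin J) (Fin L) R) (S : Finset (Fin L))
  (hS : S.card = J + 1)

theorem eraseSub_orderEmbOfFin (k : Fin (J + 1)) :
    eraseSub H S hS (S.orderEmbOfFin hS k) (S.orderEmbOfFin_mem hS k)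
      = (H.submatrix id (S.orderEmbOfFin hS)).submatrix id k.succAbove := by
  ext j m
  change H j _ = H j _
  rw [Finset.coe_orderIsoOfFin_apply]
  exact congrArg (H j) (Finset.orderEmbOfFin_erase S hS k _ m)

def permanentVector [CommRing R] : Fin L → R :=
  fun i => if h : i ∈ S then (eraseSub H S hS i h).permanent else 0

theorem permanentVector_orderEmbOfFin [CommRing R] (k : Fin (J + 1)) :
    permanentVector H S hS (S.orderEmbOfFin hS k)
      = ((H.submatrix id (S.orderEmbOfFin hS)).submatrix id k.succAbove).permanent := by
  rw [permanentVector, dif_pos (S.orderEmbOfFin_mem hS k), eraseSub_orderEmbOfFin]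

theorem mulVec_permanentVector [CommRing R] [CharP R 2] :
    H *ᵥ permanentVector H S hS = 0 := by
  set σ := S.orderEmbOfFin hS
  set c := permanentVector H S hS with hc
  ext j
  have hsupp : ∀ i ∉ S, H j i * c i = 0 := fun i hi => by simp [hc, permanentVector, hi]
  calc (H *ᵥ c) j = ∑ i ∈ S, H j i * c i :=
        (Finset.sum_subset (Finset.subset_univ S) fun i _ hi => hsupp i hi).symm
    _ = ∑ k, H j (σ k) * c (σ k) := by
        rw [← S.map_orderEmbOfFin_univ hS, Finset.sum_map]; rfl
    _ = ((H.submatrix id σ) *ᵥ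
          fun k => ((H.submatrix id σ).submatrix id k.succAbove).permanent) j :=
        Finset.sum_congr rfl fun k _ => by rw [hc, permanentVector_orderEmbOfFin]; rfl
    _ = 0 := by rw [mulVec_permanent_submatrix_succAbove]; rfl

end PermanentVector

theorem isCodeword_permanentVector {r J L : ℕ} (H : Matrix (Fin J) (Fin L) (Rr r))
    (S : Finset (Fin L)) (hS : S.card = J + 1) : isCodeword H (permanentVector H S hS) :=
  fun j => congrFun (mulVec_permanentVector H S hS) j

theorem wH_permanentVector {r J L : ℕ} (H : Matrix (Fin J) (Fin L) (Rr r))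
    (S : Finset (Fin L)) (hS : S.card = J + 1) :
    wH (permanentVector H S hS) = ∑ i ∈ S.attach, wt (eraseSub H S hS i.1 i.2).permanent := by
  rw [wH, ← Finset.sum_subset (Finset.subset_univ S) fun i _ hi => by
    simp [permanentVector, hi, wt], ← Finset.sum_attach]
  exact Finset.sum_congr rfl fun i _ => by simp only [permanentVector, dif_pos i.2]

theorem ne_zero_of_wH_pos {r : ℕ} {κ : Type*} [Fintype κ] {c : κ → Rr r} (h : 0 < wH c) :
    c ≠ 0 := by
  rintro rfl
  simp [wH, wt] at h

theorem dmin_le_wH {r : ℕ} {ι κ : Type*} [Fintype κ] {H : Matrix ι κ (Rr r)}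
    {c : κ → Rr r} (hc : isCodeword H c) (h0 : c ≠ 0) : dmin H ≤ wH c :=
  Nat.sInf_le ⟨c, hc, h0, rfl⟩

theorem dmin_le_sum_wt_permanent_general {r J L : ℕ}
    (H : Matrix (Fin J) (Fin L) (Rr r))
    (S : Finset (Fin L)) (hS : S.card = J + 1)
    (hpos : 0 < ∑ i ∈ S.attach, wt (eraseSub H S hS i.1 i.2).permanent) :
    dmin H ≤ ∑ i ∈ S.attach, wt (eraseSub H S hS i.1 i.2).permanent := by
  rw [← wH_permanentVector] at hpos ⊢
  exact dmin_le_wH (isCodeword_permanentVector H S hS) (ne_zero_of_wH_pos hpos)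

/-- minimum distance bound from the polynomial parity-check matrix. -/
theorem dmin_le_sum_wt_permanent {r J L : ℕ} (hr : 0 < r) (hJL : J + 1 ≤ L)
    (H : Matrix (Fin J) (Fin L) (Rr r))
    (S : Finset (Fin L)) (hS : S.card = J + 1)
    (hpos : 0 < ∑ i ∈ S.attach, wt (eraseSub H S hS i.1 i.2).permanent) :
    dmin H ≤ ∑ i ∈ S.attach, wt (eraseSub H S hS i.1 i.2).permanent :=
  dmin_le_sum_wt_permanent_general H S hS hpos
end
end

section
/- Let C be a quasi-cyclic code defined by a J×L polynomial parity-check matrix H(x) over F_2[x]/(x^r−1), and let A = wt(H(x)) be its J×L integer weight matrix. For any subset S ⊆ {0,...,L-1} of size J+1 such that Σ_{i∈S} perm(A_{S\{i}}) > 0, the minimum Hamming distance of C satisfies d_min(C) ≤ Σ_{i∈S} perm(A_{S\{i}}). -/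
open Matrix BigOperators

noncomputable section

/-! Since the sum of permanents is positive, some `A_{S∖{k}}` has a permutation diagonal free of
zeros, i.e. an injection `ρ` of the rows into the columns of `H_S` hitting only nonzero entries.
For a set `T` of rows, keep the rows of `H_S` indexed by `T` and replace every other row `j` by
the unit vector at `ρ j`; take `T` maximal such that the vector of signed maximal minors of this
`J × (J + 1)` matrix is nonzero (for `T = ∅` one minor is a permutation matrix). That vector is
killed by the rows in `T`, as in Cramer's rule, and by every other row `j` of `H_S` too: its
pairing with `H j` is, up to sign, a minor of the matrix for `T ∪ {j}`, so it vanishes by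
maximality. Each minor is a determinant whose entries have weights bounded entrywise by
`A_{S∖{i}}`, the unit rows sitting on nonzero entries, so its weight is at most
`perm(A_{S∖{i}})`. -/

namespace Matrix

section CofactorVec

variable {R : Type*} [CommRing R] {J : ℕ}

def cofactorVec (B : Matrix (Fin J) (Fin (J + 1)) R) : Fin (J + 1) → R :=
  fun i => (-1) ^ (i : ℕ) * (B.submatrix id i.succAbove).det

theorem dotProduct_cofactorVec (v : Fin (J + 1) → R) (B : Matrix (Fin J) (Fin (J + 1)) R) :
    v ⬝ᵥ cofactorVec B = (of (vecCons v fun j => B j)).det := by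
  rw [det_succ_row_zero]
  refine Finset.sum_congr rfl fun i _ => ?_
  have hminor : (of (vecCons v fun j => B j)).submatrix Fin.succ i.succAbove =
      B.submatrix id i.succAbove :=
    rfl
  rw [hminor, cofactorVec, of_apply, cons_val_zero]
  ring

theorem mulVec_cofactorVec (B : Matrix (Fin J) (Fin (J + 1)) R) : B *ᵥ cofactorVec B = 0 := by
  funext j
  rw [mulVec, dotProduct_cofactorVec]
  exact det_zero_of_row_eq (Fin.succ_ne_zero j).symm rfl

theorem dotProduct_cofactorVec_updateRow (B : Matrix (Fin J) (Fin (J + 1)) R) (j : Fin J)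
    (u v : Fin (J + 1) → R) :
    v ⬝ᵥ cofactorVec (B.updateRow j u) = -(u ⬝ᵥ cofactorVec (B.updateRow j v)) := by
  have hswap : of (vecCons u fun k => B.updateRow j v k) =
      (of (vecCons v fun k => B.updateRow j u k)).submatrix (Equiv.swap 0 j.succ) id := by
    ext a b
    refine Fin.cases ?_ (fun a => ?_) a
    · simp only [of_apply, submatrix_apply, Equiv.swap_apply_left, cons_val_zero, cons_val_succ,
        updateRow_self, id]
    rcases eq_or_ne a j with rfl | ha
    · simp only [of_apply, submatrix_apply, Equiv.swap_apply_right, cons_val_zero, cons_val_succ,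
        updateRow_self, id]
    · rw [submatrix_apply, Equiv.swap_apply_of_ne_of_ne (Fin.succ_ne_zero a)
        (Fin.succ_injective _ |>.ne ha)]
      simp only [of_apply, cons_val_succ, updateRow_ne ha, id]
  rw [dotProduct_cofactorVec, dotProduct_cofactorVec, hswap, det_permute,
    Equiv.Perm.sign_swap (Fin.succ_ne_zero j).symm, Units.val_neg, Units.val_one, Int.cast_neg,
    Int.cast_one, neg_one_mul, neg_neg]

theorem cofactorVec_unitRows_ne_zero [Nontrivial R] {ρ : Fin J → Fin (J + 1)}
    (hρ : Function.Injective ρ) :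
    cofactorVec (of fun j => (Pi.single (ρ j) 1 : Fin (J + 1) → R)) ≠ 0 := by
  obtain ⟨i₀, hi₀⟩ : ∃ i₀, ∀ j, ρ j ≠ i₀ := by
    by_contra! h
    simpa using Fintype.card_le_of_surjective ρ fun i => (h i).imp fun _ => id
  choose σ hσ using fun j => Fin.exists_succAbove_eq (hi₀ j)
  have hσinj : Function.Injective σ := fun a b hab => hρ (by rw [← hσ, ← hσ, hab])
  set e := Equiv.ofBijective σ (Finite.injective_iff_bijective.1 hσinj)
  have hminor : (of fun j => (Pi.single (ρ j) 1 : Fin (J + 1) → R)).submatrix id i₀.succAbove =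
      (1 : Matrix (Fin J) (Fin J) R).submatrix e id := by
    ext j k
    simp [Pi.single_apply, one_apply, e, ← hσ j, eq_comm]
  intro h
  have h₀ := congrFun h i₀
  rw [cofactorVec, hminor, det_permute, det_one, mul_one] at h₀
  exact ((isUnit_neg_one.pow _).mul
    ((Equiv.Perm.sign e).isUnit.map (Int.castRingHom R))).ne_zero h₀

def unitRowsOutside {m n : Type*} [DecidableEq m] [DecidableEq n] (N : Matrix m n R)
    (T : Finset m) (ρ : m → n) : Matrix m n R :=
  of fun j => if j ∈ T then N j else Pi.single (ρ j) 1

theorem exists_cofactorVec_unitRowsOutside_ne_zero_and_mulVec_eq_zero [Nontrivial R]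
    (N : Matrix (Fin J) (Fin (J + 1)) R) {ρ : Fin J → Fin (J + 1)}
    (hρ : Function.Injective ρ) :
    ∃ T : Finset (Fin J), cofactorVec (N.unitRowsOutside T ρ) ≠ 0 ∧
      N *ᵥ cofactorVec (N.unitRowsOutside T ρ) = 0 := by
  classical
  obtain ⟨T, hT, hmax⟩ := Finset.exists_max_image
    (Finset.univ.filter fun T => cofactorVec (N.unitRowsOutside T ρ) ≠ 0) Finset.card
    ⟨∅, Finset.mem_filter.2 ⟨Finset.mem_univ _, by
      simpa [unitRowsOutside] using cofactorVec_unitRows_ne_zero (R := R) hρ⟩⟩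
  set B := N.unitRowsOutside T ρ
  refine ⟨T, (Finset.mem_filter.1 hT).2, funext fun j => ?_⟩
  by_cases hj : j ∈ T
  · have hrow : N j = B j := (if_pos hj).symm
    rw [mulVec, hrow, ← mulVec, mulVec_cofactorVec]
  by_contra hne
  have hunit : B.updateRow j (Pi.single (ρ j) 1) = B := by
    have hBj : B j = Pi.single (ρ j) 1 := if_neg hj
    rw [← hBj, updateRow_eq_self]
  have hinsert : N.unitRowsOutside (insert j T) ρ = B.updateRow j (N j) := by
    funext k
    rcases eq_or_ne k j with rfl | hk
    · rw [updateRow_self]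
      exact if_pos (Finset.mem_insert_self k T)
    · rw [updateRow_ne hk]
      exact if_congr (by simp [hk]) rfl rfl
  have hcoord :
      cofactorVec (N.unitRowsOutside (insert j T) ρ) (ρ j) = -(N *ᵥ cofactorVec B) j := by
    rw [hinsert, ← single_one_dotProduct (ρ j) (cofactorVec (B.updateRow j (N j))),
      dotProduct_cofactorVec_updateRow, hunit, mulVec]
  have hinsert_ne : cofactorVec (N.unitRowsOutside (insert j T) ρ) ≠ 0 := by
    intro h
    rw [h, Pi.zero_apply, eq_comm, neg_eq_zero] at hcoord
    exact hne hcoord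
  have := hmax _ (Finset.mem_filter.2 ⟨Finset.mem_univ _, hinsert_ne⟩)
  rw [Finset.card_insert_of_notMem hj] at this
  omega

end CofactorVec

theorem permanent_mono {n R : Type*} [Fintype n] [DecidableEq n] [CommSemiring R]
    [PartialOrder R] [CanonicallyOrderedAdd R] [IsOrderedRing R] {M M' : Matrix n n R}
    (h : ∀ i j, M i j ≤ M' i j) : M.permanent ≤ M'.permanent :=
  Finset.sum_le_sum fun _ _ => Finset.prod_le_prod (fun _ _ => zero_le) fun _ _ => h _ _

theorem exists_perm_forall_ne_zero_of_permanent_ne_zero {n R : Type*} [Fintype n]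
    [DecidableEq n] [CommSemiring R] {M : Matrix n n R} (h : M.permanent ≠ 0) :
    ∃ σ : Equiv.Perm n, ∀ i, M (σ i) i ≠ 0 := by
  obtain ⟨σ, -, hσ⟩ := Finset.exists_ne_zero_of_sum_ne_zero h
  exact ⟨σ, fun i hi => hσ (Finset.prod_eq_zero (Finset.mem_univ i) hi)⟩

end Matrix

section Weight

variable {r : ℕ}

theorem wt_eq_zero_iff {p : Rr r} : wt p = 0 ↔ p = 0 := by
  simp [wt]

theorem wt_one : wt (1 : Rr r) = 1 := by
  classical
  simp [wt, AddMonoidAlgebra.one_def]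

theorem wt_neg (p : Rr r) : wt (-p) = wt p :=
  congrArg Finset.card (Finsupp.support_neg p.coeff)

theorem wt_add_le (p q : Rr r) : wt (p + q) ≤ wt p + wt q :=
  (Finset.card_le_card Finsupp.support_add).trans (Finset.card_union_le _ _)

theorem wt_mul_le (p q : Rr r) : wt (p * q) ≤ wt p * wt q := by
  classical
  exact (Finset.card_le_card (AddMonoidAlgebra.support_coeff_mul_subset p q)).trans
    Finset.card_add_le

theorem wt_det_le_permanent {n : Type*} [Fintype n] [DecidableEq n] (M : Matrix n n (Rr r)) :
    wt M.det ≤ (M.map wt).permanent := by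
  rw [det_apply, permanent]
  refine (Finset.le_sum_of_subadditive wt (wt_eq_zero_iff.2 rfl).le wt_add_le _ _).trans
    (Finset.sum_le_sum fun σ _ => ?_)
  have hsign : wt (Equiv.Perm.sign σ • ∏ i, M (σ i) i) = wt (∏ i, M (σ i) i) := by
    rcases Int.units_eq_one_or (Equiv.Perm.sign σ) with h | h <;>
      simp only [h, one_smul, Units.neg_smul, wt_neg]
  rw [hsign]
  exact Finset.le_prod_of_submultiplicative wt wt_one.le wt_mul_le _ _

theorem wt_cofactorVec {J : ℕ} (B : Matrix (Fin J) (Fin (J + 1)) (Rr r)) (i : Fin (J + 1)) :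
    wt (B.cofactorVec i) = wt (B.submatrix id i.succAbove).det := by
  rcases neg_one_pow_eq_or (Rr r) (i : ℕ) with h | h <;>
    simp only [cofactorVec, h, one_mul, neg_one_mul, wt_neg]

theorem wt_unitRowsOutside_le {m n : Type*} [DecidableEq m] [DecidableEq n]
    {N : Matrix m n (Rr r)} {ρ : m → n} (hN : ∀ j, N j (ρ j) ≠ 0) (T : Finset m) (j : m)
    (k : n) : wt (N.unitRowsOutside T ρ j k) ≤ wt (N j k) := by
  change wt ((if j ∈ T then N j else Pi.single (ρ j) 1) k) ≤ _
  split_ifs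
  · exact le_rfl
  rcases eq_or_ne k (ρ j) with rfl | hk
  · rw [Pi.single_eq_same, wt_one]
    exact Nat.one_le_iff_ne_zero.2 (mt wt_eq_zero_iff.1 (hN j))
  · rw [Pi.single_eq_of_ne hk, wt_eq_zero_iff.2 rfl]
    exact Nat.zero_le _

theorem exists_mulVec_eq_zero_wt_le_permanent {J : ℕ} (N : Matrix (Fin J) (Fin (J + 1)) (Rr r))
    {ρ : Fin J → Fin (J + 1)} (hρ : Function.Injective ρ) (hN : ∀ j, N j (ρ j) ≠ 0) :
    ∃ x ≠ 0, N *ᵥ x = 0 ∧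
      ∀ i, wt (x i) ≤ ((N.map wt).submatrix id i.succAbove).permanent := by
  obtain ⟨T, hx, hNx⟩ := N.exists_cofactorVec_unitRowsOutside_ne_zero_and_mulVec_eq_zero hρ
  refine ⟨_, hx, hNx, fun i => ?_⟩
  calc wt ((N.unitRowsOutside T ρ).cofactorVec i)
      = wt ((N.unitRowsOutside T ρ).submatrix id i.succAbove).det := wt_cofactorVec _ i
    _ ≤ (((N.unitRowsOutside T ρ).submatrix id i.succAbove).map wt).permanent :=
      wt_det_le_permanent _
    _ ≤ ((N.map wt).submatrix id i.succAbove).permanent :=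
      permanent_mono fun j k => wt_unitRowsOutside_le hN T j (i.succAbove k)

theorem dmin_le_sum_wt_of_submatrix_mulVec_eq_zero {ι κ ν : Type*} [Fintype κ] [Fintype ν]
    (H : Matrix ι κ (Rr r)) {e : ν → κ} (he : Function.Injective e) {x : ν → Rr r}
    (hx : x ≠ 0) (hHx : H.submatrix id e *ᵥ x = 0) : dmin H ≤ ∑ i, wt (x i) := by
  set c := Function.extend e x (0 : κ → Rr r)
  have hce : ∀ i, c (e i) = x i := he.extend_apply x (0 : κ → Rr r)
  have hc0 : ∀ l ∉ Set.range e, c l = 0 := fun l hl =>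
    Function.extend_apply' x (0 : κ → Rr r) l (by simpa using hl)
  have hsum : ∀ {M : Type} [AddCommMonoid M] (f : κ → Rr r → M), (∀ l, f l 0 = 0) →
      ∑ l, f l (c l) = ∑ i, f (e i) (x i) := fun f hf =>
    (Fintype.sum_of_injective e he _ _ (fun l hl => by rw [hc0 l hl, hf]) fun i => by
      rw [hce]).symm
  have hcode : isCodeword H c := fun j => by
    rw [hsum (fun l a => H j l * a) fun l => mul_zero _]
    exact congrFun hHx j
  have hc : c ≠ 0 := fun h =>
    hx (funext fun i => by rw [← hce, h, Pi.zero_apply, Pi.zero_apply])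
  calc dmin H ≤ wH c := Nat.sInf_le ⟨c, hcode, hc, rfl⟩
    _ = ∑ i, wt (x i) := hsum (fun _ a => wt a) fun _ => wt_eq_zero_iff.2 rfl

end Weight

theorem Finset.orderEmbOfFin_erase_orderEmbOfFin {α : Type*} [LinearOrder α] (s : Finset α)
    {n : ℕ} (h : s.card = n + 1) (k : Fin (n + 1)) (h' : (s.erase (s.orderEmbOfFin h k)).card = n)
    (m : Fin n) :
    (s.erase (s.orderEmbOfFin h k)).orderEmbOfFin h' m = s.orderEmbOfFin h (k.succAbove m) := by
  refine congrFun (Finset.orderEmbOfFin_unique h' (fun m => Finset.mem_erase.2 ⟨?_, ?_⟩)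
    ((s.orderEmbOfFin h).strictMono.comp (Fin.strictMono_succAbove k))).symm m
  · exact (s.orderEmbOfFin h).injective.ne (Fin.succAbove_ne k m)
  · exact Finset.orderEmbOfFin_mem s h _

theorem eraseSub_eq_submatrix {J L : ℕ} {R : Type*} (A : Matrix (Fin J) (Fin L) R)
    (S : Finset (Fin L)) (hS : S.card = J + 1) (k : Fin (J + 1)) {i : Fin L} (hi : i ∈ S)
    (hik : i = S.orderEmbOfFin hS k) :
    eraseSub A S hS i hi = (A.submatrix id (S.orderEmbOfFin hS)).submatrix id k.succAbove := by
  subst hik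
  ext j m
  exact congrArg (A j) ((Finset.coe_orderIsoOfFin_apply _ _ m).trans
    (Finset.orderEmbOfFin_erase_orderEmbOfFin S hS k _ m))

theorem sum_attach_permanent_eraseSub {J L : ℕ} {R : Type*} [CommSemiring R]
    (A : Matrix (Fin J) (Fin L) R) (S : Finset (Fin L)) (hS : S.card = J + 1) :
    ∑ i ∈ S.attach, (eraseSub A S hS i.1 i.2).permanent =
      ∑ k : Fin (J + 1),
        ((A.submatrix id (S.orderEmbOfFin hS)).submatrix id k.succAbove).permanent := by
  rw [← Finset.univ_eq_attach, ← (S.orderIsoOfFin hS).toEquiv.sum_comp]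
  exact Fintype.sum_congr _ _ fun k => congrArg permanent
    (eraseSub_eq_submatrix A S hS k _ (Finset.coe_orderIsoOfFin_apply S hS k))

theorem dmin_le_sum_permanent_wt_general {r J L : ℕ}
    (H : Matrix (Fin J) (Fin L) (Rr r))
    (A : Matrix (Fin J) (Fin L) ℕ) (hA : ∀ j i, A j i = wt (H j i))
    (S : Finset (Fin L)) (hS : S.card = J + 1)
    (hpos : 0 < ∑ i ∈ S.attach, (eraseSub A S hS i.1 i.2).permanent) :
    dmin H ≤ ∑ i ∈ S.attach, (eraseSub A S hS i.1 i.2).permanent := by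
  set e := S.orderEmbOfFin hS
  set N := H.submatrix id e
  have hAN : A.submatrix id e = N.map wt := ext fun j k => hA j (e k)
  rw [sum_attach_permanent_eraseSub, hAN] at hpos ⊢
  obtain ⟨k, -, hk⟩ := Finset.exists_ne_zero_of_sum_ne_zero hpos.ne'
  obtain ⟨σ, hσ⟩ := exists_perm_forall_ne_zero_of_permanent_ne_zero hk
  have hρ : Function.Injective fun j => k.succAbove (σ.symm j) :=
    Fin.succAbove_right_injective.comp σ.symm.injective
  have hN : ∀ j, N j (k.succAbove (σ.symm j)) ≠ 0 := fun j h => by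
    simpa [h, wt_eq_zero_iff] using hσ (σ.symm j)
  obtain ⟨x, hx, hNx, hwt⟩ := exists_mulVec_eq_zero_wt_le_permanent N hρ hN
  exact (dmin_le_sum_wt_of_submatrix_mulVec_eq_zero H e.injective hx hNx).trans
    (Finset.sum_le_sum fun i _ => hwt i)

/-- minimum distance bound from the weight matrix. -/
theorem dmin_le_sum_permanent_wt {r J L : ℕ} (hr : 0 < r)
    (H : Matrix (Fin J) (Fin L) (Rr r))
    (A : Matrix (Fin J) (Fin L) ℕ) (hA : ∀ j i, A j i = wt (H j i))
    (S : Finset (Fin L)) (hS : S.card = J + 1)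
    (hpos : 0 < ∑ i ∈ S.attach, (eraseSub A S hS i.1 i.2).permanent) :
    dmin H ≤ ∑ i ∈ S.attach, (eraseSub A S hS i.1 i.2).permanent :=
  dmin_le_sum_permanent_wt_general H A hA S hS hpos
end
end
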